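/- arXiv:2511.00597 — 2 statements merged into one kernel-verified Lean document; each statement's English description precedes it below -/
import Mathlib

section
/- Let X be a sub-Weibull random variable of order α > 0 with finite mean. Then ‖X − E[X]‖_{ψ_α} ≤ C_α^{(3)} ‖X‖_{ψ_α}, where C_α^{(3)} = C_α^{(2)} (1 + C_α^{(1)} (log 2)^{−1/α}), with C_α^{(2)} = 2^{1/α} if α < 1 and C_α^{(2)} = 1 if α ≥ 1, and C_α^{(1)} = 2√(2π) e^{α/12} e^{1/(2e)} α^{−(α+2)/(2α)}. -/
open MeasureTheory Real

/-! Write `m = E X`. Since `u ≤ (α e)^{-1/α} exp (u^α)` for `u ≥ 0`, every admissible radius `c`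
of `X` (i.e. `E exp (|X|^α / c^α) ≤ 2`) bounds the first moment: `|m| ≤ E|X| ≤ C₁ c`. The constant
`m` is then admissible at radius `C₁ c (log 2)^{-1/α}`, and the quasi-triangle inequality for
admissible radii (from `(u+v)^α ≤ u^α + v^α` when `α ≤ 1`, convexity of `u ↦ u^α` when `α ≥ 1`,
and convexity of `exp`) makes `C₂ (c + C₁ c (log 2)^{-1/α})` admissible for `X - m`.
A radius at which `exp (|X|^α / c^α)` is not integrable is admissible only because the Bochner
integral is then `0`; `X - m` is then non-integrable at every radius `≤ c/2` as well, so
`‖X - m‖_{ψ_α} = 0`. -/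

/-- The sub-Weibull(α) quasi-norm. -/
noncomputable def psiNorm {Ω : Type*} [MeasurableSpace Ω] (μ : Measure Ω) (α : ℝ)
    (X : Ω → ℝ) : ℝ :=
  sInf {c : ℝ | 0 < c ∧ ∫ ω, Real.exp (|X ω| ^ α / c ^ α) ∂μ ≤ 2}

noncomputable def psiTriangleConst (α : ℝ) : ℝ := if α < 1 then (2 : ℝ) ^ (1 / α) else 1

noncomputable def psiMomentConst (α : ℝ) : ℝ :=
  2 * √(2 * π) * exp (α / 12) * exp (1 / (2 * exp 1)) * α ^ (-(α + 2) / (2 * α))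

lemma psiTriangleConst_pos (α : ℝ) : 0 < psiTriangleConst α := by
  unfold psiTriangleConst; split_ifs <;> positivity

lemma psiMomentConst_pos {α : ℝ} (hα : 0 < α) : 0 < psiMomentConst α := by
  have : 0 < α ^ (-(α + 2) / (2 * α)) := by positivity
  unfold psiMomentConst; positivity

lemma le_mul_exp_rpow {α u : ℝ} (hα : 0 < α) (hu : 0 ≤ u) :
    u ≤ (α * exp 1)⁻¹ ^ (1 / α) * exp (u ^ α) := by
  -- `v ≤ exp (v - 1)` at `v = α u ^ α`, then take `α`-th roots
  have key : u ^ α ≤ (α * exp 1)⁻¹ * exp (u ^ α) ^ α := by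
    have h := add_one_le_exp (u ^ α * α - 1)
    rw [exp_sub, exp_mul, sub_add_cancel, le_div_iff₀ (exp_pos 1)] at h
    rw [mul_inv, mul_assoc, le_inv_mul_iff₀ hα, le_inv_mul_iff₀ (exp_pos 1)]
    linarith
  calc u = (u ^ α) ^ (1 / α) := by rw [← rpow_mul hu, mul_one_div_cancel hα.ne', rpow_one]
    _ ≤ ((α * exp 1)⁻¹ * exp (u ^ α) ^ α) ^ (1 / α) := by gcongr
    _ = (α * exp 1)⁻¹ ^ (1 / α) * exp (u ^ α) := by
      rw [mul_rpow (by positivity) (by positivity), ← rpow_mul (exp_pos _).le,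
        mul_one_div_cancel hα.ne', rpow_one]

lemma two_mul_inv_rpow_le_psiMomentConst {α : ℝ} (hα : 0 < α) :
    2 * (α * exp 1)⁻¹ ^ (1 / α) ≤ psiMomentConst α := by
  have hsplit : (α * exp 1)⁻¹ ^ (1 / α) = α ^ (-(1 / α)) * exp (-(1 / α)) := by
    rw [mul_inv, mul_rpow (by positivity) (by positivity), ← rpow_neg_one α,
      ← rpow_mul hα.le, ← exp_neg, ← exp_one_rpow, ← rpow_mul (exp_pos 1).le, exp_one_rpow]
    ring_nf
  have hexp : α ^ (-(α + 2) / (2 * α)) = α ^ (-(1 / α)) * (√α)⁻¹ := by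
    rw [sqrt_eq_rpow, ← rpow_neg hα.le, ← rpow_add hα]
    congr 1
    field_simp
    ring
  -- `α ≤ 6 + α ≤ 2π e^{α/6}`, so `√α ≤ √(2π) e^{α/12}`; the remaining factors are `≤ 1 ≤ …`
  have hsqrt : √α ≤ √(2 * π) * exp (α / 12) := by
    have hα6 : α ≤ 2 * π * exp (α / 6) := by
      nlinarith [pi_gt_three, add_one_le_exp (α / 6), exp_pos (α / 6)]
    calc √α ≤ √(2 * π * exp (α / 6)) := sqrt_le_sqrt hα6
      _ = √(2 * π) * exp (α / 12) := by
        rw [sqrt_mul (by positivity), show α / 12 = α / 6 / 2 by ring, exp_half]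
  have h1 : exp (-(1 / α)) ≤ 1 := exp_le_one_iff.2 (by simp [hα.le])
  have h2 : 1 ≤ exp (1 / (2 * exp 1)) := one_le_exp (by positivity)
  have hsα : 0 < √α := sqrt_pos.2 hα
  rw [hsplit, psiMomentConst, hexp]
  have hA : 0 < α ^ (-(1 / α)) := by positivity
  field_simp
  nlinarith [mul_le_mul h1 hsqrt hsα.le zero_le_one, exp_pos (α / 12),
    mul_pos (sqrt_pos.2 (by positivity : (0:ℝ) < 2 * π)) (exp_pos (α / 12))]

lemma rpow_abs_add_div_le {α t c : ℝ} (hα : 0 ≤ α) (ht : 0 < t) (htc : 2 * t ≤ c) (x y : ℝ) :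
    |x + y| ^ α / c ^ α ≤ |x| ^ α / t ^ α + |y| ^ α / t ^ α := by
  have hc : 0 < c := by linarith
  have hmax : |x + y| / c ≤ max (|x| / t) (|y| / t) := by
    rw [div_le_iff₀ hc]
    calc |x + y| ≤ |x| + |y| := abs_add_le x y
      _ ≤ max (|x| / t) (|y| / t) * (2 * t) := by
        have := le_max_left (|x| / t) (|y| / t)
        have := le_max_right (|x| / t) (|y| / t)
        rw [div_le_iff₀ ht] at *
        linarith
      _ ≤ max (|x| / t) (|y| / t) * c := by gcongr
  rw [← div_rpow (abs_nonneg _) hc.le, ← div_rpow (abs_nonneg _) ht.le,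
    ← div_rpow (abs_nonneg _) ht.le]
  calc (|x + y| / c) ^ α ≤ max (|x| / t) (|y| / t) ^ α := by gcongr
    _ ≤ (|x| / t) ^ α + (|y| / t) ^ α := by
      rcases max_choice (|x| / t) (|y| / t) with h | h <;> rw [h]
      · linarith [rpow_nonneg (by positivity : 0 ≤ |y| / t) α]
      · linarith [rpow_nonneg (by positivity : 0 ≤ |x| / t) α]

lemma rpow_abs_sub_div_le_of_le_one {α c b : ℝ} (hα0 : 0 < α) (hα1 : α ≤ 1) (hc : 0 < c)
    (hb : 0 < b) (x y : ℝ) :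
    |x - y| ^ α / (2 ^ (1 / α) * (c + b)) ^ α ≤
      1 / 2 * (|x| ^ α / c ^ α) + (1 - 1 / 2) * (|y| ^ α / b ^ α) := by
  have h2 : ((2 : ℝ) ^ (1 / α) * (c + b)) ^ α = 2 * (c + b) ^ α := by
    rw [mul_rpow (by positivity) (by positivity), ← rpow_mul zero_le_two,
      one_div_mul_cancel hα0.ne', rpow_one]
  have hsub : |x - y| ^ α ≤ |x| ^ α + |y| ^ α :=
    (rpow_le_rpow (abs_nonneg _) (abs_sub x y) hα0.le).trans
      (rpow_add_le_add_rpow (abs_nonneg _) (abs_nonneg _) hα0.le hα1)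
  have hcα : c ^ α ≤ (c + b) ^ α := by gcongr; linarith
  have hbα : b ^ α ≤ (c + b) ^ α := by gcongr; linarith
  rw [h2]
  calc |x - y| ^ α / (2 * (c + b) ^ α)
      ≤ |x| ^ α / (2 * (c + b) ^ α) + |y| ^ α / (2 * (c + b) ^ α) := by
        rw [← add_div]; gcongr
    _ ≤ |x| ^ α / (2 * c ^ α) + |y| ^ α / (2 * b ^ α) := by gcongr
    _ = _ := by ring

lemma rpow_abs_sub_div_le_of_one_le {α c b : ℝ} (hα : 1 ≤ α) (hc : 0 < c) (hb : 0 < b)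
    (x y : ℝ) :
    |x - y| ^ α / (c + b) ^ α ≤
      c / (c + b) * (|x| ^ α / c ^ α) + (1 - c / (c + b)) * (|y| ^ α / b ^ α) := by
  have hθ : 1 - c / (c + b) = b / (c + b) := by field_simp; ring
  have hmix : |x - y| / (c + b) ≤ c / (c + b) * (|x| / c) + (1 - c / (c + b)) * (|y| / b) := by
    rw [hθ, show c / (c + b) * (|x| / c) + b / (c + b) * (|y| / b) = (|x| + |y|) / (c + b) by
      field_simp]
    gcongr
    exact abs_sub x y
  have hconv := (convexOn_rpow hα).2 (Set.mem_Ici.2 (by positivity : 0 ≤ |x| / c))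
    (Set.mem_Ici.2 (by positivity : 0 ≤ |y| / b)) (by positivity : 0 ≤ c / (c + b))
    (by rw [hθ]; positivity) (add_sub_cancel _ _)
  simp only [smul_eq_mul] at hconv
  rw [← div_rpow (abs_nonneg _) (by positivity), ← div_rpow (abs_nonneg _) hc.le,
    ← div_rpow (abs_nonneg _) hb.le]
  exact (rpow_le_rpow (by positivity) hmix (by linarith)).trans hconv

lemma exists_exp_rpow_abs_sub_div_le {α c b : ℝ} (hα : 0 < α) (hc : 0 < c) (hb : 0 < b) :
    ∃ θ ∈ Set.Icc (0 : ℝ) 1, ∀ x y : ℝ,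
      exp (|x - y| ^ α / (psiTriangleConst α * (c + b)) ^ α) ≤
        θ * exp (|x| ^ α / c ^ α) + (1 - θ) * exp (|y| ^ α / b ^ α) := by
  suffices h : ∃ θ ∈ Set.Icc (0 : ℝ) 1, ∀ x y : ℝ,
      |x - y| ^ α / (psiTriangleConst α * (c + b)) ^ α ≤
        θ * (|x| ^ α / c ^ α) + (1 - θ) * (|y| ^ α / b ^ α) by
    obtain ⟨θ, ⟨hθ0, hθ1⟩, h⟩ := h
    refine ⟨θ, ⟨hθ0, hθ1⟩, fun x y => (exp_le_exp.2 (h x y)).trans ?_⟩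
    simpa only [smul_eq_mul] using convexOn_exp.2 (Set.mem_univ _) (Set.mem_univ _) hθ0
      (sub_nonneg.2 hθ1) (add_sub_cancel θ 1)
  unfold psiTriangleConst
  split_ifs with hα1
  · exact ⟨1 / 2, by norm_num, rpow_abs_sub_div_le_of_le_one hα hα1.le hc hb⟩
  · refine ⟨c / (c + b), ⟨by positivity, by rw [div_le_one (by positivity)]; linarith⟩, ?_⟩
    simpa only [one_mul] using rpow_abs_sub_div_le_of_one_le (not_lt.1 hα1) hc hb

section

variable {Ω : Type*} [MeasurableSpace Ω] {μ : Measure Ω} {α : ℝ}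

def psiAdmissible (μ : Measure Ω) (α : ℝ) (X : Ω → ℝ) : Set ℝ :=
  {c : ℝ | 0 < c ∧ ∫ ω, exp (|X ω| ^ α / c ^ α) ∂μ ≤ 2}

lemma psiNorm_eq_sInf_psiAdmissible (X : Ω → ℝ) :
    psiNorm μ α X = sInf (psiAdmissible μ α X) :=
  rfl

lemma psiNorm_le_of_mem {X : Ω → ℝ} {c : ℝ} (hc : c ∈ psiAdmissible μ α X) :
    psiNorm μ α X ≤ c := by
  rw [psiNorm_eq_sInf_psiAdmissible]
  exact csInf_le ⟨0, fun _ h => h.1.le⟩ hc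

lemma psiNorm_le_mul_of_forall_mem {X Y : Ω → ℝ} {K : ℝ} (hK : 0 < K)
    (hX : (psiAdmissible μ α X).Nonempty)
    (h : ∀ c ∈ psiAdmissible μ α X, psiNorm μ α Y ≤ K * c) :
    psiNorm μ α Y ≤ K * psiNorm μ α X := by
  rw [← div_le_iff₀' hK, psiNorm_eq_sInf_psiAdmissible X]
  exact le_csInf hX fun c hc => (div_le_iff₀' hK).2 (h c hc)

lemma psiNorm_nonpos_of_not_integrable {Y : Ω → ℝ} {c : ℝ} (hc : 0 < c)
    (h : ∀ t ∈ Set.Ioc 0 c, ¬ Integrable (fun ω => exp (|Y ω| ^ α / t ^ α)) μ) :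
    psiNorm μ α Y ≤ 0 := by
  refine le_of_forall_pos_le_add fun ε hε => ?_
  have ht : min ε c ∈ Set.Ioc 0 c := ⟨lt_min hε hc, min_le_right _ _⟩
  have hmem : min ε c ∈ psiAdmissible μ α Y := ⟨ht.1, by rw [integral_undef (h _ ht)]; norm_num⟩
  linarith [psiNorm_le_of_mem hmem, min_le_left ε c]

lemma integrable_exp_rpow_div_of_sub_const [IsFiniteMeasure μ] (hα : 0 ≤ α) {X : Ω → ℝ}
    (hX : AEStronglyMeasurable X μ) (m : ℝ) {t c : ℝ} (ht : 0 < t) (htc : 2 * t ≤ c)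
    (h : Integrable (fun ω => exp (|X ω - m| ^ α / t ^ α)) μ) :
    Integrable (fun ω => exp (|X ω| ^ α / c ^ α)) μ := by
  refine (h.mul_const (exp (|m| ^ α / t ^ α))).mono' (by fun_prop) (ae_of_all _ fun ω => ?_)
  rw [norm_of_nonneg (exp_pos _).le, ← exp_add]
  simpa using exp_le_exp.2 (rpow_abs_add_div_le hα ht htc (X ω - m) m)

lemma psiNorm_sub_const_nonpos [IsFiniteMeasure μ] (hα : 0 ≤ α) {X : Ω → ℝ}
    (hX : AEStronglyMeasurable X μ) (m : ℝ) {c : ℝ} (hc : 0 < c)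
    (hI : ¬ Integrable (fun ω => exp (|X ω| ^ α / c ^ α)) μ) :
    psiNorm μ α (fun ω => X ω - m) ≤ 0 :=
  psiNorm_nonpos_of_not_integrable (half_pos hc) fun t ht hint =>
    hI (integrable_exp_rpow_div_of_sub_const hα hX m ht.1 (by linarith [ht.2]) hint)

lemma sub_mem_psiAdmissible (hα : 0 < α) {f g : Ω → ℝ} (hf : AEStronglyMeasurable f μ)
    (hg : AEStronglyMeasurable g μ) {c b : ℝ} (hc : c ∈ psiAdmissible μ α f)
    (hb : b ∈ psiAdmissible μ α g) (hfi : Integrable (fun ω => exp (|f ω| ^ α / c ^ α)) μ)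
    (hgi : Integrable (fun ω => exp (|g ω| ^ α / b ^ α)) μ) :
    psiTriangleConst α * (c + b) ∈ psiAdmissible μ α (fun ω => f ω - g ω) := by
  obtain ⟨θ, ⟨hθ0, hθ1⟩, hpt⟩ := exists_exp_rpow_abs_sub_div_le hα hc.1 hb.1
  have hdom : Integrable
      (fun ω => θ * exp (|f ω| ^ α / c ^ α) + (1 - θ) * exp (|g ω| ^ α / b ^ α)) μ :=
    (hfi.const_mul θ).add (hgi.const_mul (1 - θ))
  have hmeas : AEStronglyMeasurable
      (fun ω => exp (|f ω - g ω| ^ α / (psiTriangleConst α * (c + b)) ^ α)) μ := by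
    fun_prop (disch := exact hα.le)
  have hfg := hdom.mono' hmeas (ae_of_all μ fun ω => by
    rw [norm_of_nonneg (exp_pos _).le]; exact hpt (f ω) (g ω))
  refine ⟨mul_pos (psiTriangleConst_pos α) (add_pos hc.1 hb.1), ?_⟩
  calc ∫ ω, exp (|f ω - g ω| ^ α / (psiTriangleConst α * (c + b)) ^ α) ∂μ
      ≤ ∫ ω, (θ * exp (|f ω| ^ α / c ^ α) + (1 - θ) * exp (|g ω| ^ α / b ^ α)) ∂μ :=
        integral_mono hfg hdom fun ω => hpt (f ω) (g ω)
    _ = θ * ∫ ω, exp (|f ω| ^ α / c ^ α) ∂μ + (1 - θ) * ∫ ω, exp (|g ω| ^ α / b ^ α) ∂μ := by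
        rw [integral_add (hfi.const_mul θ) (hgi.const_mul (1 - θ)), integral_const_mul,
          integral_const_mul]
    _ ≤ θ * 2 + (1 - θ) * 2 :=
        add_le_add (mul_le_mul_of_nonneg_left hc.2 hθ0)
          (mul_le_mul_of_nonneg_left hb.2 (sub_nonneg.2 hθ1))
    _ = 2 := by ring

lemma integral_abs_le_psiMomentConst_mul (hα : 0 < α) {X : Ω → ℝ}
    (hX : AEStronglyMeasurable X μ) {c : ℝ} (hc : c ∈ psiAdmissible μ α X)
    (hI : Integrable (fun ω => exp (|X ω| ^ α / c ^ α)) μ) :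
    ∫ ω, |X ω| ∂μ ≤ psiMomentConst α * c := by
  set β := (α * exp 1)⁻¹ ^ (1 / α)
  have hβ : 0 < β := rpow_pos_of_pos (by positivity) _
  have hpt (ω : Ω) : |X ω| ≤ β * c * exp (|X ω| ^ α / c ^ α) := by
    have h := le_mul_exp_rpow hα (div_nonneg (abs_nonneg (X ω)) hc.1.le)
    rw [div_rpow (abs_nonneg _) hc.1.le, div_le_iff₀ hc.1] at h
    linarith
  have hdom := hI.const_mul (β * c)
  calc ∫ ω, |X ω| ∂μ ≤ ∫ ω, β * c * exp (|X ω| ^ α / c ^ α) ∂μ :=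
        integral_mono (hdom.mono' hX.norm (ae_of_all μ fun ω => by simpa using hpt ω)) hdom hpt
    _ = β * c * ∫ ω, exp (|X ω| ^ α / c ^ α) ∂μ := integral_const_mul _ _
    _ ≤ β * c * 2 := mul_le_mul_of_nonneg_left hc.2 (mul_pos hβ hc.1).le
    _ = 2 * β * c := by ring
    _ ≤ psiMomentConst α * c :=
        mul_le_mul_of_nonneg_right (two_mul_inv_rpow_le_psiMomentConst hα) hc.1.le

lemma const_mem_psiAdmissible [IsProbabilityMeasure μ] (hα : 0 < α) {m a : ℝ} (ha : 0 < a)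
    (hm : |m| ≤ a) :
    a * log 2 ^ (-1 / α) ∈ psiAdmissible μ α (fun _ => m) := by
  have hlog : 0 < log 2 := log_pos one_lt_two
  have hpow : (a * log 2 ^ (-1 / α)) ^ α = a ^ α / log 2 := by
    rw [mul_rpow ha.le (by positivity), ← rpow_mul hlog.le, div_mul_cancel₀ _ hα.ne',
      rpow_neg_one, div_eq_mul_inv]
  refine ⟨by positivity, ?_⟩
  rw [integral_const, probReal_univ, one_smul, hpow]
  calc exp (|m| ^ α / (a ^ α / log 2)) ≤ exp (log 2) := by
        rw [exp_le_exp, div_div_eq_mul_div, div_le_iff₀ (by positivity), mul_comm]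
        gcongr
    _ = 2 := exp_log two_pos

lemma mem_psiAdmissible_sub_integral [IsProbabilityMeasure μ] (hα : 0 < α) {X : Ω → ℝ}
    (hX : Integrable X μ) {c : ℝ} (hc : c ∈ psiAdmissible μ α X)
    (hI : Integrable (fun ω => exp (|X ω| ^ α / c ^ α)) μ) :
    psiTriangleConst α * (1 + psiMomentConst α * log 2 ^ (-1 / α)) * c ∈
      psiAdmissible μ α (fun ω => X ω - ∫ ω', X ω' ∂μ) := by
  have hmean : |∫ ω, X ω ∂μ| ≤ psiMomentConst α * c :=
    abs_integral_le_integral_abs.trans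
      (integral_abs_le_psiMomentConst_mul hα hX.aestronglyMeasurable hc hI)
  have hconst := const_mem_psiAdmissible (μ := μ) hα (mul_pos (psiMomentConst_pos hα) hc.1) hmean
  convert sub_mem_psiAdmissible hα hX.aestronglyMeasurable aestronglyMeasurable_const hc hconst hI
    (integrable_const _) using 1
  ring

end

/-- centering of sub-Weibull random variables. -/
theorem subWeibull_centering {Ω : Type*} [MeasurableSpace Ω] (μ : Measure Ω)
    [IsProbabilityMeasure μ] (α : ℝ) (hα : 0 < α) (X : Ω → ℝ)
    (hint : Integrable X μ)
    (hX : {c : ℝ | 0 < c ∧ ∫ ω, Real.exp (|X ω| ^ α / c ^ α) ∂μ ≤ 2}.Nonempty) :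
    psiNorm μ α (fun ω => X ω - ∫ ω', X ω' ∂μ) ≤
      ((if α < 1 then (2 : ℝ) ^ (1 / α) else 1) *
        (1 + (2 * Real.sqrt (2 * Real.pi) * Real.exp (α / 12) *
                Real.exp (1 / (2 * Real.exp 1)) * α ^ (-(α + 2) / (2 * α))) *
              Real.log 2 ^ (-(1 : ℝ) / α))) * psiNorm μ α X := by
  have hK : 0 < psiTriangleConst α * (1 + psiMomentConst α * log 2 ^ (-1 / α)) := by
    have := psiMomentConst_pos hα
    have := psiTriangleConst_pos α
    have : 0 < log 2 ^ (-1 / α) := rpow_pos_of_pos (log_pos one_lt_two) _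
    positivity
  refine psiNorm_le_mul_of_forall_mem hK hX fun c hc => ?_
  by_cases hI : Integrable (fun ω => exp (|X ω| ^ α / c ^ α)) μ
  · exact psiNorm_le_of_mem (mem_psiAdmissible_sub_integral hα hint hc hI)
  · exact (psiNorm_sub_const_nonpos hα.le hint.1 _ hc.1 hI).trans (mul_pos hK hc.1).le
end

section
/- For ε ≥ 2, the series e · exp(−ε) · ∑_{k≥1} 2^{2^{k+1}} exp(−2^k ε) is at most 2 exp(−ε); equivalently, e ∑_{k≥1} 2^{2^{k+1}} exp(−2^{k+1} ε) ≤ 2 exp(−ε). -/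
open Real

/-!
Put `r = 2 / e`. For `ε ≥ 2` the `k`-th term `2 ^ 2 ^ (k + 2) * exp (-(2 ^ (k + 1) * ε))` of the
first series is at most `r ^ 2 ^ (k + 2)`, and since `2 ^ (k + 2) ≥ 4 (k + 1)` these are dominated
by the geometric series `∑ (r ^ 4) ^ (k + 1) = r ^ 4 / (1 - r ^ 4)`, which is at most `r` because
`r ^ 3 + r ^ 4 ≤ 1` (`r < 0.74`). Hence the first series is at most `2 / e`. The second series is
termwise at most `exp (-ε)` times the first, as `2 ^ (k + 2) ε ≥ ε + 2 ^ (k + 1) ε`.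
-/

lemma pow_two_pow_add_two_le_geometric {r : ℝ} (h0 : 0 ≤ r) (h1 : r ≤ 1) (k : ℕ) :
    r ^ 2 ^ (k + 2) ≤ r ^ 4 * (r ^ 4) ^ k := by
  rw [← pow_succ', ← pow_mul]
  refine pow_le_pow_of_le_one h0 h1 ?_
  have hk : k < 2 ^ k := Nat.lt_two_pow_self
  rw [pow_add]
  omega

lemma summable_pow_two_pow_add_two {r : ℝ} (h0 : 0 ≤ r) (h1 : r < 1) :
    Summable fun k : ℕ ↦ r ^ 2 ^ (k + 2) :=
  .of_nonneg_of_le (fun _ ↦ by positivity) (pow_two_pow_add_two_le_geometric h0 h1.le)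
    ((summable_geometric_of_lt_one (by positivity) (pow_lt_one₀ h0 h1 four_ne_zero)).mul_left _)

lemma tsum_pow_two_pow_add_two_le {r : ℝ} (h0 : 0 ≤ r) (h1 : r < 1) :
    ∑' k : ℕ, r ^ 2 ^ (k + 2) ≤ r ^ 4 / (1 - r ^ 4) := by
  have h4 : r ^ 4 < 1 := pow_lt_one₀ h0 h1 four_ne_zero
  have hgeom := (summable_geometric_of_lt_one (by positivity) h4).mul_left (r ^ 4)
  calc ∑' k : ℕ, r ^ 2 ^ (k + 2) ≤ ∑' k : ℕ, r ^ 4 * (r ^ 4) ^ k :=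
        (summable_pow_two_pow_add_two h0 h1).tsum_le_tsum
          (pow_two_pow_add_two_le_geometric h0 h1.le) hgeom
    _ = r ^ 4 / (1 - r ^ 4) := by
        rw [tsum_mul_left, tsum_geometric_of_lt_one (by positivity) h4, div_eq_mul_inv]

lemma tsum_two_mul_exp_neg_one_pow_two_pow_add_two_le :
    ∑' k : ℕ, (2 * exp (-1)) ^ 2 ^ (k + 2) ≤ 2 * exp (-1) := by
  set r := 2 * exp (-1)
  have h0 : 0 ≤ r := by positivity
  have hr : r < 0.74 := by linarith [exp_neg_one_lt_d9]
  have hcubic : r ^ 3 + r ^ 4 ≤ 1 := by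
    nlinarith [pow_le_pow_left₀ h0 hr.le 3, pow_le_pow_left₀ h0 hr.le 4]
  have h4 : r ^ 4 < 1 := by nlinarith [pow_le_pow_left₀ h0 hr.le 4]
  refine (tsum_pow_two_pow_add_two_le h0 (by linarith)).trans ?_
  rw [div_le_iff₀ (by linarith)]
  nlinarith

lemma two_pow_two_pow_mul_exp_le {ε : ℝ} (hε : 2 ≤ ε) (k : ℕ) :
    (2 : ℝ) ^ 2 ^ (k + 2) * exp (-(2 ^ (k + 1) * ε)) ≤ (2 * exp (-1)) ^ 2 ^ (k + 2) := by
  rw [mul_pow, ← exp_nat_mul]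
  gcongr
  push_cast
  rw [pow_succ _ (k + 1)]
  nlinarith [pow_pos (two_pos : (0 : ℝ) < 2) (k + 1)]

lemma summable_two_pow_two_pow_mul_exp {ε : ℝ} (hε : 2 ≤ ε) :
    Summable fun k : ℕ ↦ (2 : ℝ) ^ 2 ^ (k + 2) * exp (-(2 ^ (k + 1) * ε)) :=
  .of_nonneg_of_le (fun _ ↦ by positivity) (two_pow_two_pow_mul_exp_le hε)
    (summable_pow_two_pow_add_two (by positivity) (by linarith [exp_neg_one_lt_half]))

lemma tsum_two_pow_two_pow_mul_exp_le {ε : ℝ} (hε : 2 ≤ ε) :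
    ∑' k : ℕ, (2 : ℝ) ^ 2 ^ (k + 2) * exp (-(2 ^ (k + 1) * ε)) ≤ 2 * exp (-1) :=
  ((summable_two_pow_two_pow_mul_exp hε).tsum_le_tsum (two_pow_two_pow_mul_exp_le hε)
    (summable_pow_two_pow_add_two (by positivity) (by linarith [exp_neg_one_lt_half]))).trans
    tsum_two_mul_exp_neg_one_pow_two_pow_add_two_le

lemma two_pow_two_pow_mul_exp_le_exp_mul {ε : ℝ} (hε : 0 ≤ ε) (k : ℕ) :
    (2 : ℝ) ^ 2 ^ (k + 2) * exp (-(2 ^ (k + 2) * ε)) ≤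
      exp (-ε) * ((2 : ℝ) ^ 2 ^ (k + 2) * exp (-(2 ^ (k + 1) * ε))) := by
  rw [mul_left_comm, ← exp_add]
  gcongr
  rw [pow_succ _ (k + 1)]
  nlinarith [one_le_pow₀ (one_le_two (α := ℝ)) (n := k + 1)]

/-- analytic series inequality used in the generic chaining proof. -/
theorem chaining_series_bound :
    ∀ ε : ℝ, 2 ≤ ε →
      (Real.exp 1 * Real.exp (-ε) *
          ∑' k : ℕ, (2 : ℝ) ^ (2 ^ (k + 2)) * Real.exp (-((2 : ℝ) ^ (k + 1) * ε)) ≤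
        2 * Real.exp (-ε)) ∧
      (Real.exp 1 *
          ∑' k : ℕ, (2 : ℝ) ^ (2 ^ (k + 2)) * Real.exp (-((2 : ℝ) ^ (k + 2) * ε)) ≤
        2 * Real.exp (-ε)) := by
  intro ε hε
  have hsum := summable_two_pow_two_pow_mul_exp hε
  have hfirst : exp 1 * exp (-ε) * ∑' k : ℕ, (2 : ℝ) ^ 2 ^ (k + 2) * exp (-(2 ^ (k + 1) * ε)) ≤
      2 * exp (-ε) :=
    calc _ ≤ exp 1 * exp (-ε) * (2 * exp (-1)) := by
          gcongr; exact tsum_two_pow_two_pow_mul_exp_le hε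
      _ = 2 * exp (-ε) := by rw [exp_neg 1]; field_simp
  refine ⟨hfirst, ?_⟩
  have hterm := two_pow_two_pow_mul_exp_le_exp_mul (by linarith : (0 : ℝ) ≤ ε)
  calc exp 1 * ∑' k : ℕ, (2 : ℝ) ^ 2 ^ (k + 2) * exp (-(2 ^ (k + 2) * ε))
      ≤ exp 1 * ∑' k : ℕ, exp (-ε) * ((2 : ℝ) ^ 2 ^ (k + 2) * exp (-(2 ^ (k + 1) * ε))) := by
        refine mul_le_mul_of_nonneg_left ?_ (exp_pos 1).le
        have hsum' := hsum.mul_left (exp (-ε))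
        exact (hsum'.of_nonneg_of_le (fun _ ↦ by positivity) hterm).tsum_le_tsum hterm hsum'
    _ = exp 1 * exp (-ε) * ∑' k : ℕ, (2 : ℝ) ^ 2 ^ (k + 2) * exp (-(2 ^ (k + 1) * ε)) := by
        rw [tsum_mul_left, mul_assoc]
    _ ≤ 2 * exp (-ε) := hfirst
end
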